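/- Let ρ(x) = (24/(πe)) sin(πx) x^x (1−x)^{1−x} for x ∈ (0,1). Then ρ satisfies, for all x ∈ (0,1), the second-order linear ordinary differential equation ρ''(x) + 4·atanh(1−2x)·ρ'(x) + [ π² − 1/(x(1−x)) + 4·atanh(1−2x)² ]·ρ(x) = 0. -/

import Mathlib

/-!
On `(0,1)` we have `x^x (1-x)^(1-x) = exp (-H x)`, where `H` is the binary entropy, and
`atanh (1 - 2x) = H'(x) / 2`, `H''(x) = -1 / (x(1-x))`. So `ρ = s · exp (-H)` with
`s x = c · sin (π x)`, and multiplication by `exp (-H)` conjugates `d²/dx²` into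
`d²/dx² + 2H' d/dx + (H'² + H'')`: the equation for `ρ` is just `s'' + π² s = 0`.
-/

noncomputable def atanh (z : ℝ) : ℝ := (1 / 2) * Real.log ((1 + z) / (1 - z))

noncomputable def rhoU (x : ℝ) : ℝ :=
  24 / (Real.pi * Real.exp 1) * Real.sin (Real.pi * x) * x ^ x * (1 - x) ^ (1 - x)

open Real Filter Topology Set

section MulExpNeg

variable {s h : ℝ → ℝ} {x : ℝ}

lemma hasDerivAt_mul_exp_neg {s' h' : ℝ} (hs : HasDerivAt s s' x) (hh : HasDerivAt h h' x) :
    HasDerivAt (fun y => s y * exp (-h y)) ((s' - h' * s x) * exp (-h x)) x := by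
  refine (hs.mul hh.neg.exp).congr_deriv ?_
  rw [Pi.neg_apply]
  ring

lemma deriv_deriv_mul_exp_neg (hs : ∀ᶠ y in 𝓝 x, DifferentiableAt ℝ s y)
    (hh : ∀ᶠ y in 𝓝 x, DifferentiableAt ℝ h y) (hs' : DifferentiableAt ℝ (deriv s) x)
    (hh' : DifferentiableAt ℝ (deriv h) x) :
    deriv (deriv fun y => s y * exp (-h y)) x =
      (deriv (deriv s) x - 2 * deriv h x * deriv s x +
        (deriv h x ^ 2 - deriv (deriv h) x) * s x) * exp (-h x) := by
  have hderiv : deriv (fun y => s y * exp (-h y)) =ᶠ[𝓝 x]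
      fun y => (deriv s y - deriv h y * s y) * exp (-h y) := by
    filter_upwards [hs, hh] with y hsy hhy
    exact (hasDerivAt_mul_exp_neg hsy.hasDerivAt hhy.hasDerivAt).deriv
  have hs₁ : HasDerivAt (fun y => deriv s y - deriv h y * s y)
      (deriv (deriv s) x - (deriv (deriv h) x * s x + deriv h x * deriv s x)) x :=
    hs'.hasDerivAt.sub (hh'.hasDerivAt.mul hs.self_of_nhds.hasDerivAt)
  rw [hderiv.deriv_eq, (hasDerivAt_mul_exp_neg hs₁ hh.self_of_nhds.hasDerivAt).deriv]
  ring

end MulExpNeg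

lemma hasDerivAt_const_mul_sin_mul (c k x : ℝ) :
    HasDerivAt (fun y => c * sin (k * y)) (c * k * cos (k * x)) x := by
  refine (((hasDerivAt_id x).const_mul k).sin.const_mul c).congr_deriv ?_
  simp only [id_eq, mul_one]
  ring

lemma deriv_const_mul_sin_mul (c k : ℝ) :
    deriv (fun y => c * sin (k * y)) = fun x => c * k * cos (k * x) :=
  funext fun x => (hasDerivAt_const_mul_sin_mul c k x).deriv

lemma deriv_deriv_const_mul_sin_mul (c k x : ℝ) :
    deriv (deriv fun y => c * sin (k * y)) x = -k ^ 2 * (c * sin (k * x)) := by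
  rw [deriv_const_mul_sin_mul]
  refine (((hasDerivAt_id x).const_mul k).cos.const_mul (c * k)).deriv.trans ?_
  simp only [id_eq, mul_one]
  ring

lemma differentiableAt_deriv_binEntropy {x : ℝ} (hx₀ : x ≠ 0) (hx₁ : x ≠ 1) :
    DifferentiableAt ℝ (deriv binEntropy) x := by
  rw [show deriv binEntropy = fun p => log (1 - p) - log p from funext deriv_binEntropy]
  have : 1 - x ≠ 0 := sub_ne_zero.2 hx₁.symm
  fun_prop (disch := assumption)

lemma deriv_deriv_binEntropy (x : ℝ) : deriv (deriv binEntropy) x = -1 / (x * (1 - x)) :=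
  deriv2_binEntropy

lemma atanh_one_sub_two_mul {x : ℝ} (hx : x ∈ Ioo (0 : ℝ) 1) :
    atanh (1 - 2 * x) = deriv binEntropy x / 2 := by
  obtain ⟨hx₀, hx₁⟩ := hx
  have : (1 + (1 - 2 * x)) / (1 - (1 - 2 * x)) = (1 - x) / x := by
    field_simp
    ring
  rw [atanh, deriv_binEntropy, this, log_div (by linarith) hx₀.ne']
  ring

lemma rpow_self_mul_one_sub_rpow {x : ℝ} (hx : x ∈ Ioo (0 : ℝ) 1) :
    x ^ x * (1 - x) ^ (1 - x) = exp (-binEntropy x) := by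
  obtain ⟨hx₀, hx₁⟩ := hx
  rw [rpow_def_of_pos hx₀, rpow_def_of_pos (by linarith), ← exp_add, binEntropy, log_inv,
    log_inv]
  ring_nf

/-- On `(0,1)`, the uniform derangetropy satisfies the second-order linear ODE
`ρ'' + 4·atanh(1-2x)·ρ' + (π² - 1/(x(1-x)) + 4·atanh(1-2x)²)·ρ = 0`. -/
theorem rhoU_ode :
    ∀ x ∈ Set.Ioo (0:ℝ) 1,
      deriv (deriv rhoU) x + 4 * atanh (1 - 2 * x) * deriv rhoU x +
        (Real.pi ^ 2 - 1 / (x * (1 - x)) + 4 * atanh (1 - 2 * x) ^ 2) * rhoU x = 0 := by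
  intro x hx
  set s := fun y => 24 / (π * exp 1) * sin (π * y)
  have hρ : rhoU =ᶠ[𝓝 x] fun y => s y * exp (-binEntropy y) := by
    filter_upwards [isOpen_Ioo.mem_nhds hx] with y hy
    rw [rhoU, mul_assoc _ (y ^ y), rpow_self_mul_one_sub_rpow hy]
  have hx₀ : x ≠ 0 := hx.1.ne'
  have hx₁ : x ≠ 1 := hx.2.ne
  have hs : ∀ y, DifferentiableAt ℝ s y := fun y =>
    (hasDerivAt_const_mul_sin_mul _ _ y).differentiableAt
  have hH : ∀ᶠ y in 𝓝 x, DifferentiableAt ℝ binEntropy y :=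
    (eventually_ne_nhds hx₀).and (eventually_ne_nhds hx₁) |>.mono
      fun y hy => differentiableAt_binEntropy hy.1 hy.2
  rw [hρ.deriv.deriv_eq, hρ.deriv_eq, hρ.eq_of_nhds,
    deriv_deriv_mul_exp_neg (Eventually.of_forall hs) hH
      (by rw [deriv_const_mul_sin_mul]; fun_prop) (differentiableAt_deriv_binEntropy hx₀ hx₁),
    (hasDerivAt_mul_exp_neg (hs x).hasDerivAt hH.self_of_nhds.hasDerivAt).deriv,
    deriv_deriv_const_mul_sin_mul, deriv_deriv_binEntropy, atanh_one_sub_two_mul hx]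
  ring
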